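/- arXiv:2512.07397 — 3 statements merged into one kernel-verified Lean document; each statement's English description precedes it below -/
import Mathlib

section
/- Let Σ ⊆ ℝ^N be nonempty, and let P⊥ : ℝ^N → ℝ^N be a selection of the orthogonal projection onto Σ, i.e. for every z ∈ ℝ^N, P⊥(z) ∈ Σ and ‖z − P⊥(z)‖₂ ≤ ‖z − x‖₂ for all x ∈ Σ. Suppose P⊥ satisfies the restricted β-Lipschitz property with respect to Σ with constant β⊥. For α > 0 define P_α : ℝ^N → ℝ^N by P_α(z) = (1 + α‖z − P⊥(z)‖₂ / ‖P⊥(z)‖₂) · P⊥(z) if P⊥(z) ≠ 0, and P_α(z) = 0 if P⊥(z) = 0. Then, assuming Σ is closed under nonnegative scaling so that P_α(z) ∈ Σ, P_α satisfies the restricted (β⊥ + α)-Lipschitz property: for all z ∈ ℝ^N and x ∈ Σ, ‖P_α(z) − x‖₂ ≤ (β⊥ + α) ‖z − x‖₂. -/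
/-!
Write `p = P⊥(z)`. Since `P_α(z) - x = (p - x) + (α ‖z - p‖ / ‖p‖) • p`, the triangle inequality gives
`‖P_α(z) - x‖ ≤ ‖p - x‖ + α ‖z - p‖`. The first term is at most `β⊥ ‖z - x‖` by the restricted
Lipschitz property, and the second at most `α ‖z - x‖` because `p` is a closest point of `Σ` to `z`.
-/

theorem norm_one_add_div_norm_smul_sub_le {E : Type*} [NormedAddCommGroup E] [NormedSpace ℝ E]
    (p x : E) {r : ℝ} (hr : 0 ≤ r) : ‖(1 + r / ‖p‖) • p - x‖ ≤ ‖p - x‖ + r := by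
  have hsplit : (1 + r / ‖p‖) • p - x = (p - x) + (r / ‖p‖) • p := by
    rw [add_smul, one_smul]; abel
  have hstretch : ‖(r / ‖p‖) • p‖ ≤ r := by
    rw [norm_smul, Real.norm_of_nonneg (by positivity)]
    rcases eq_or_ne ‖p‖ 0 with hp | hp
    · simpa [hp] using hr
    · rw [div_mul_cancel₀ r hp]
  calc ‖(1 + r / ‖p‖) • p - x‖ ≤ ‖p - x‖ + ‖(r / ‖p‖) • p‖ := hsplit ▸ norm_add_le _ _
    _ ≤ ‖p - x‖ + r := by gcongr

open Classical in
theorem perturbed_orthogonal_projection_restricted_lipschitz_general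
    {N : ℕ} (S : Set (EuclideanSpace ℝ (Fin N)))
    (Pperp : EuclideanSpace ℝ (Fin N) → EuclideanSpace ℝ (Fin N))
    (hmin : ∀ z, ∀ x ∈ S, ‖z - Pperp z‖ ≤ ‖z - x‖)
    (βperp : ℝ)
    (hLip : ∀ z, ∀ x ∈ S, ‖Pperp z - x‖ ≤ βperp * ‖z - x‖)
    (α : ℝ) (hα : 0 < α)
    (Pα : EuclideanSpace ℝ (Fin N) → EuclideanSpace ℝ (Fin N))
    (hPα : ∀ z, Pα z =
      if Pperp z ≠ 0 then (1 + α * (‖z - Pperp z‖ / ‖Pperp z‖)) • Pperp z else 0) :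
    ∀ z, ∀ x ∈ S, ‖Pα z - x‖ ≤ (βperp + α) * ‖z - x‖ := by
  intro z x hx
  -- With `r / 0 = 0`, the `else` branch is the `then` formula evaluated at `P⊥(z) = 0`.
  have hPα' : Pα z = (1 + α * ‖z - Pperp z‖ / ‖Pperp z‖) • Pperp z := by
    rw [hPα z, mul_div_assoc]
    split_ifs with hp
    · rfl
    · rw [not_not.mp hp, smul_zero]
  calc ‖Pα z - x‖ ≤ ‖Pperp z - x‖ + α * ‖z - Pperp z‖ :=
        hPα' ▸ norm_one_add_div_norm_smul_sub_le _ _ (by positivity)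
    _ ≤ βperp * ‖z - x‖ + α * ‖z - x‖ :=
        add_le_add (hLip z x hx) (mul_le_mul_of_nonneg_left (hmin z x hx) hα.le)
    _ = (βperp + α) * ‖z - x‖ := by ring

open Classical in
/-- Degrading the restricted Lipschitz constant of an orthogonal projection:
the perturbed projection `P_α` is restricted `(β⊥ + α)`-Lipschitz. -/
theorem perturbed_orthogonal_projection_restricted_lipschitz
    {N : ℕ} (S : Set (EuclideanSpace ℝ (Fin N))) (hne : S.Nonempty)
    (Pperp : EuclideanSpace ℝ (Fin N) → EuclideanSpace ℝ (Fin N))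
    (hmem : ∀ z, Pperp z ∈ S)
    (hmin : ∀ z, ∀ x ∈ S, ‖z - Pperp z‖ ≤ ‖z - x‖)
    (βperp : ℝ)
    (hLip : ∀ z, ∀ x ∈ S, ‖Pperp z - x‖ ≤ βperp * ‖z - x‖)
    (α : ℝ) (hα : 0 < α)
    (hscale : ∀ c : ℝ, 0 ≤ c → ∀ x ∈ S, c • x ∈ S)
    (Pα : EuclideanSpace ℝ (Fin N) → EuclideanSpace ℝ (Fin N))
    (hPα : ∀ z, Pα z =
      if Pperp z ≠ 0 then (1 + α * (‖z - Pperp z‖ / ‖Pperp z‖)) • Pperp z else 0) :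
    ∀ z, ∀ x ∈ S, ‖Pα z - x‖ ≤ (βperp + α) * ‖z - x‖ :=
  perturbed_orthogonal_projection_restricted_lipschitz_general S Pperp hmin βperp hLip α hα Pα hPα
end

section
/- Let Σ₁ ⊆ E₁ and Σ₂ ⊆ E₂ be nonempty subsets of Euclidean spaces, equip E₁ × E₂ with the ℓ²-product norm, and set Σ = Σ₁ × Σ₂. Let Q : E₁ × E₂ → E₁ × E₂ be a generalized projection onto Σ satisfying the restricted β_Q-Lipschitz property with respect to Σ. Then for every fixed x₁ ∈ Σ₁, the map P̃₂ : E₂ → E₂ defined by P̃₂(z₂) = [Q(x₁, z₂)]₂ (the second component of Q(x₁,z₂)) is a generalized projection onto Σ₂ satisfying the restricted β_Q-Lipschitz property with respect to Σ₂: for all z₂ ∈ E₂ and x₂ ∈ Σ₂, ‖P̃₂(z₂) − x₂‖₂ ≤ β_Q ‖z₂ − x₂‖₂. -/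
open WithLp

def IsGeneralizedProjection {E : Type*} (P : E → E) (s : Set E) : Prop :=
  ∀ z, P z ∈ s

def IsRestrictedLipschitz {E : Type*} [SeminormedAddCommGroup E] (P : E → E) (s : Set E)
    (β : ℝ) : Prop :=
  ∀ z, ∀ x ∈ s, ‖P z - x‖ ≤ β * ‖z - x‖

section Slice

variable {p : ENNReal} {α β : Type*} {Q : WithLp p (α × β) → WithLp p (α × β)}
  {S₁ : Set α} {S₂ : Set β} {x₁ : α}

def sliceSnd (Q : WithLp p (α × β) → WithLp p (α × β)) (x₁ : α) (z₂ : β) : β :=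
  (Q (toLp p (x₁, z₂))).snd

lemma isGeneralizedProjection_sliceSnd
    (hQ : IsGeneralizedProjection Q {x | x.fst ∈ S₁ ∧ x.snd ∈ S₂}) (x₁ : α) :
    IsGeneralizedProjection (sliceSnd Q x₁) S₂ :=
  fun _ => (hQ _).2

variable [Fact (1 ≤ p)] [SeminormedAddCommGroup α] [SeminormedAddCommGroup β]

lemma WithLp.norm_toLp_sub_toLp_same_fst (x : α) (y₁ y₂ : β) :
    ‖toLp p (x, y₁) - toLp p (x, y₂)‖ = ‖y₁ - y₂‖ := by
  rw [← toLp_sub, Prod.mk_sub_mk, sub_self, norm_toLp_snd]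

lemma isRestrictedLipschitz_sliceSnd {K : ℝ}
    (hQ : IsRestrictedLipschitz Q {x | x.fst ∈ S₁ ∧ x.snd ∈ S₂} K) (hx₁ : x₁ ∈ S₁) :
    IsRestrictedLipschitz (sliceSnd Q x₁) S₂ K := fun z₂ x₂ hx₂ =>
  calc ‖sliceSnd Q x₁ z₂ - x₂‖ = ‖(Q (toLp p (x₁, z₂)) - toLp p (x₁, x₂)).snd‖ := rfl
    _ ≤ ‖Q (toLp p (x₁, z₂)) - toLp p (x₁, x₂)‖ := WithLp.norm_snd_le _ _
    _ ≤ K * ‖toLp p (x₁, z₂) - toLp p (x₁, x₂)‖ := hQ _ _ ⟨hx₁, hx₂⟩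
    _ = K * ‖z₂ - x₂‖ := by rw [WithLp.norm_toLp_sub_toLp_same_fst]

end Slice

theorem sliced_projection_restricted_lipschitz_general
    {N₁ N₂ : ℕ}
    (S₁ : Set (EuclideanSpace ℝ (Fin N₁))) (S₂ : Set (EuclideanSpace ℝ (Fin N₂)))
    (Q : WithLp 2 (EuclideanSpace ℝ (Fin N₁) × EuclideanSpace ℝ (Fin N₂)) →
         WithLp 2 (EuclideanSpace ℝ (Fin N₁) × EuclideanSpace ℝ (Fin N₂)))
    (βQ : ℝ)
    (S : Set (WithLp 2 (EuclideanSpace ℝ (Fin N₁) × EuclideanSpace ℝ (Fin N₂))))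
    (hS : S = {z | ((WithLp.equiv 2 (EuclideanSpace ℝ (Fin N₁) × EuclideanSpace ℝ (Fin N₂))) z).1 ∈ S₁
      ∧ ((WithLp.equiv 2 (EuclideanSpace ℝ (Fin N₁) × EuclideanSpace ℝ (Fin N₂))) z).2 ∈ S₂})
    (hQmem : ∀ z, Q z ∈ S)
    (hQlip : ∀ z, ∀ x ∈ S, ‖Q z - x‖ ≤ βQ * ‖z - x‖)
    (x₁ : EuclideanSpace ℝ (Fin N₁)) (hx₁ : x₁ ∈ S₁)
    (P₂ : EuclideanSpace ℝ (Fin N₂) → EuclideanSpace ℝ (Fin N₂))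
    (hP₂ : ∀ z₂, P₂ z₂ =
      ((WithLp.equiv 2 (EuclideanSpace ℝ (Fin N₁) × EuclideanSpace ℝ (Fin N₂)))
        (Q ((WithLp.equiv 2 (EuclideanSpace ℝ (Fin N₁) × EuclideanSpace ℝ (Fin N₂))).symm
          (x₁, z₂)))).2) :
    (∀ z₂, P₂ z₂ ∈ S₂) ∧ (∀ z₂, ∀ x₂ ∈ S₂, ‖P₂ z₂ - x₂‖ ≤ βQ * ‖z₂ - x₂‖) := by
  obtain rfl : P₂ = sliceSnd Q x₁ := funext hP₂
  subst hS
  exact ⟨isGeneralizedProjection_sliceSnd hQmem x₁, isRestrictedLipschitz_sliceSnd hQlip hx₁⟩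

/-- Slicing a restricted Lipschitz generalized projection onto a product model:
fixing the first coordinate at a point of `Σ₁`, the second component of `Q` is
a generalized projection onto `Σ₂` with the same restricted Lipschitz constant. -/
theorem sliced_projection_restricted_lipschitz
    {N₁ N₂ : ℕ}
    (S₁ : Set (EuclideanSpace ℝ (Fin N₁))) (S₂ : Set (EuclideanSpace ℝ (Fin N₂)))
    (h₁ : S₁.Nonempty) (h₂ : S₂.Nonempty)
    (Q : WithLp 2 (EuclideanSpace ℝ (Fin N₁) × EuclideanSpace ℝ (Fin N₂)) →
         WithLp 2 (EuclideanSpace ℝ (Fin N₁) × EuclideanSpace ℝ (Fin N₂)))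
    (βQ : ℝ)
    (S : Set (WithLp 2 (EuclideanSpace ℝ (Fin N₁) × EuclideanSpace ℝ (Fin N₂))))
    (hS : S = {z | ((WithLp.equiv 2 (EuclideanSpace ℝ (Fin N₁) × EuclideanSpace ℝ (Fin N₂))) z).1 ∈ S₁
      ∧ ((WithLp.equiv 2 (EuclideanSpace ℝ (Fin N₁) × EuclideanSpace ℝ (Fin N₂))) z).2 ∈ S₂})
    (hQmem : ∀ z, Q z ∈ S)
    (hQlip : ∀ z, ∀ x ∈ S, ‖Q z - x‖ ≤ βQ * ‖z - x‖)
    (x₁ : EuclideanSpace ℝ (Fin N₁)) (hx₁ : x₁ ∈ S₁)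
    (P₂ : EuclideanSpace ℝ (Fin N₂) → EuclideanSpace ℝ (Fin N₂))
    (hP₂ : ∀ z₂, P₂ z₂ =
      ((WithLp.equiv 2 (EuclideanSpace ℝ (Fin N₁) × EuclideanSpace ℝ (Fin N₂)))
        (Q ((WithLp.equiv 2 (EuclideanSpace ℝ (Fin N₁) × EuclideanSpace ℝ (Fin N₂))).symm
          (x₁, z₂)))).2) :
    (∀ z₂, P₂ z₂ ∈ S₂) ∧ (∀ z₂, ∀ x₂ ∈ S₂, ‖P₂ z₂ - x₂‖ ≤ βQ * ‖z₂ - x₂‖) :=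
  sliced_projection_restricted_lipschitz_general S₁ S₂ Q βQ S hS hQmem hQlip x₁ hx₁ P₂ hP₂
end

section
/- Let Σ₁ ⊆ E₁ and Σ₂ ⊆ E₂ be nonempty subsets of Euclidean spaces, equip E₁ × E₂ with the ℓ²-product norm, and set Σ = Σ₁ × Σ₂. For i = 1, 2 let β_i⋆ be the infimum of the restricted Lipschitz constants β_{Σᵢ}(P) over all generalized projections P onto Σᵢ, and suppose P_i is a generalized projection onto Σᵢ achieving the optimal constant β_i⋆. Then P_Σ(z₁,z₂) = (P₁(z₁), P₂(z₂)) is an optimal generalized projection onto Σ: its restricted Lipschitz constant equals max(β₁⋆, β₂⋆), and no generalized projection Q onto Σ has restricted Lipschitz constant strictly smaller than max(β₁⋆, β₂⋆). -/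
/-!
The product map is optimal because the ℓ² norm adds squares: componentwise bounds with constants
`β₁⋆, β₂⋆` give the bound `max β₁⋆ β₂⋆`. Conversely, freezing the second coordinate at a point of
`Σ₂` and reading off the first coordinate turns any generalized projection onto `Σ₁ × Σ₂` into one
onto `Σ₁` with the same constant (the slice embedding is an isometry and the coordinate map is
1-Lipschitz), so its constant is at least `β₁⋆`, and likewise at least `β₂⋆`.
-/

open WithLp

def RestrictedLipschitzWith {E : Type*} [SeminormedAddCommGroup E] (S : Set E) (β : ℝ)
    (P : E → E) : Prop :=
  ∀ z, ∀ x ∈ S, ‖P z - x‖ ≤ β * ‖z - x‖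

section

variable {E F : Type*} [SeminormedAddCommGroup E] [SeminormedAddCommGroup F]

theorem WithLp.prod_norm_le_mul_of_L2 {m : ℝ} {w v : WithLp 2 (E × F)}
    (h₁ : ‖w.fst‖ ≤ m * ‖v.fst‖) (h₂ : ‖w.snd‖ ≤ m * ‖v.snd‖) : ‖w‖ ≤ m * ‖v‖ := by
  have hmv : 0 ≤ m * ‖v‖ := by
    rcases le_or_gt 0 m with hm | hm
    · positivity
    -- a negative `m` forces both components of `v` to vanish
    have hv₁ : ‖v.fst‖ = 0 := by nlinarith [norm_nonneg w.fst, norm_nonneg v.fst]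
    have hv₂ : ‖v.snd‖ = 0 := by nlinarith [norm_nonneg w.snd, norm_nonneg v.snd]
    simp [prod_norm_eq_of_L2 v, hv₁, hv₂]
  refine le_of_pow_le_pow_left₀ two_ne_zero hmv ?_
  rw [mul_pow, prod_norm_sq_eq_of_L2 w, prod_norm_sq_eq_of_L2 v]
  nlinarith [pow_le_pow_left₀ (norm_nonneg _) h₁ 2, pow_le_pow_left₀ (norm_nonneg _) h₂ 2]

theorem RestrictedLipschitzWith.prodMap {S₁ : Set E} {S₂ : Set F} {β₁ β₂ : ℝ} {P₁ : E → E}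
    {P₂ : F → F} (h₁ : RestrictedLipschitzWith S₁ β₁ P₁) (h₂ : RestrictedLipschitzWith S₂ β₂ P₂) :
    RestrictedLipschitzWith (ofLp ⁻¹' S₁ ×ˢ S₂) (max β₁ β₂)
      (fun z : WithLp 2 (E × F) => toLp 2 (P₁ z.fst, P₂ z.snd)) := by
  rintro z x ⟨hx₁, hx₂⟩
  apply prod_norm_le_mul_of_L2
  · exact (h₁ _ _ hx₁).trans (mul_le_mul_of_nonneg_right (le_max_left _ _) (norm_nonneg _))
  · exact (h₂ _ _ hx₂).trans (mul_le_mul_of_nonneg_right (le_max_right _ _) (norm_nonneg _))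

variable {p : ENNReal} [Fact (1 ≤ p)] {S₁ : Set E} {S₂ : Set F} {c : ℝ}
  {Q : WithLp p (E × F) → WithLp p (E × F)}

theorem RestrictedLipschitzWith.fst_slice (hQ : RestrictedLipschitzWith (ofLp ⁻¹' S₁ ×ˢ S₂) c Q)
    {b : F} (hb : b ∈ S₂) : RestrictedLipschitzWith S₁ c (fun a => (Q (toLp p (a, b))).fst) := by
  intro z x hx
  calc ‖(Q (toLp p (z, b))).fst - x‖ = ‖(Q (toLp p (z, b)) - toLp p (x, b)).fst‖ := rfl
    _ ≤ ‖Q (toLp p (z, b)) - toLp p (x, b)‖ := norm_fst_le _ _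
    _ ≤ c * ‖toLp p (z, b) - toLp p (x, b)‖ := hQ _ _ ⟨hx, hb⟩
    _ = c * ‖z - x‖ := by rw [← toLp_sub, Prod.mk_sub_mk, sub_self, norm_toLp_fst]

theorem RestrictedLipschitzWith.snd_slice (hQ : RestrictedLipschitzWith (ofLp ⁻¹' S₁ ×ˢ S₂) c Q)
    {a : E} (ha : a ∈ S₁) : RestrictedLipschitzWith S₂ c (fun b => (Q (toLp p (a, b))).snd) := by
  intro z x hx
  calc ‖(Q (toLp p (a, z))).snd - x‖ = ‖(Q (toLp p (a, z)) - toLp p (a, x)).snd‖ := rfl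
    _ ≤ ‖Q (toLp p (a, z)) - toLp p (a, x)‖ := norm_snd_le _ _
    _ ≤ c * ‖toLp p (a, z) - toLp p (a, x)‖ := hQ _ _ ⟨ha, hx⟩
    _ = c * ‖z - x‖ := by rw [← toLp_sub, Prod.mk_sub_mk, sub_self, norm_toLp_snd]

end

/-- Optimality of the component-wise projection onto a product model
`Σ = Σ₁ × Σ₂` (with the ℓ²-product norm): if `P₁`, `P₂` achieve the optimal
restricted Lipschitz constants `β₁⋆`, `β₂⋆` for `Σ₁`, `Σ₂`, then the
component-wise map `P_Σ` is a generalized projection onto `Σ` admitting the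
restricted Lipschitz constant `max β₁⋆ β₂⋆`, and no generalized projection `Q`
onto `Σ` admits a restricted Lipschitz constant strictly smaller than
`max β₁⋆ β₂⋆`. -/
theorem product_projection_optimal
    {N₁ N₂ : ℕ}
    (S₁ : Set (EuclideanSpace ℝ (Fin N₁))) (S₂ : Set (EuclideanSpace ℝ (Fin N₂)))
    (h₁ : S₁.Nonempty) (h₂ : S₂.Nonempty)
    (β₁s β₂s : ℝ)
    -- β₁⋆ is a lower bound of the admissible restricted Lipschitz constants
    -- over all generalized projections onto Σ₁ (it is their infimum, being
    -- achieved by P₁ below), and similarly for β₂⋆.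
    (hβ₁lb : ∀ P : EuclideanSpace ℝ (Fin N₁) → EuclideanSpace ℝ (Fin N₁),
      (∀ z, P z ∈ S₁) → ∀ β : ℝ, (∀ z, ∀ x ∈ S₁, ‖P z - x‖ ≤ β * ‖z - x‖) → β₁s ≤ β)
    (hβ₂lb : ∀ P : EuclideanSpace ℝ (Fin N₂) → EuclideanSpace ℝ (Fin N₂),
      (∀ z, P z ∈ S₂) → ∀ β : ℝ, (∀ z, ∀ x ∈ S₂, ‖P z - x‖ ≤ β * ‖z - x‖) → β₂s ≤ β)
    (P₁ : EuclideanSpace ℝ (Fin N₁) → EuclideanSpace ℝ (Fin N₁))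
    (P₂ : EuclideanSpace ℝ (Fin N₂) → EuclideanSpace ℝ (Fin N₂))
    (hP₁ : ∀ z, P₁ z ∈ S₁) (hP₂ : ∀ z, P₂ z ∈ S₂)
    (hL₁ : ∀ z, ∀ x ∈ S₁, ‖P₁ z - x‖ ≤ β₁s * ‖z - x‖)
    (hL₂ : ∀ z, ∀ x ∈ S₂, ‖P₂ z - x‖ ≤ β₂s * ‖z - x‖)
    (PS : WithLp 2 (EuclideanSpace ℝ (Fin N₁) × EuclideanSpace ℝ (Fin N₂)) →
          WithLp 2 (EuclideanSpace ℝ (Fin N₁) × EuclideanSpace ℝ (Fin N₂)))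
    (hPS : ∀ z, PS z =
      (WithLp.equiv 2 (EuclideanSpace ℝ (Fin N₁) × EuclideanSpace ℝ (Fin N₂))).symm
        (P₁ ((WithLp.equiv 2 (EuclideanSpace ℝ (Fin N₁) × EuclideanSpace ℝ (Fin N₂))) z).1,
         P₂ ((WithLp.equiv 2 (EuclideanSpace ℝ (Fin N₁) × EuclideanSpace ℝ (Fin N₂))) z).2))
    (S : Set (WithLp 2 (EuclideanSpace ℝ (Fin N₁) × EuclideanSpace ℝ (Fin N₂))))
    (hS : S = {z | ((WithLp.equiv 2 (EuclideanSpace ℝ (Fin N₁) × EuclideanSpace ℝ (Fin N₂))) z).1 ∈ S₁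
      ∧ ((WithLp.equiv 2 (EuclideanSpace ℝ (Fin N₁) × EuclideanSpace ℝ (Fin N₂))) z).2 ∈ S₂}) :
    -- P_Σ is a generalized projection onto Σ,
    (∀ z, PS z ∈ S) ∧
    -- its restricted Lipschitz constant is (at most) max β₁⋆ β₂⋆,
    (∀ z, ∀ x ∈ S, ‖PS z - x‖ ≤ max β₁s β₂s * ‖z - x‖) ∧
    -- and no generalized projection onto Σ admits a strictly smaller constant,
    -- so the restricted Lipschitz constant of P_Σ equals max β₁⋆ β₂⋆ and P_Σ
    -- is optimal.
    (∀ Q : WithLp 2 (EuclideanSpace ℝ (Fin N₁) × EuclideanSpace ℝ (Fin N₂)) →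
           WithLp 2 (EuclideanSpace ℝ (Fin N₁) × EuclideanSpace ℝ (Fin N₂)),
      (∀ z, Q z ∈ S) → ∀ β : ℝ,
        (∀ z, ∀ x ∈ S, ‖Q z - x‖ ≤ β * ‖z - x‖) → max β₁s β₂s ≤ β) := by
  obtain ⟨a, ha⟩ := h₁
  obtain ⟨b, hb⟩ := h₂
  have hPS_fun : PS = fun z => toLp 2 (P₁ z.fst, P₂ z.snd) := funext hPS
  subst hPS_fun hS
  refine ⟨fun _ => ⟨hP₁ _, hP₂ _⟩, RestrictedLipschitzWith.prodMap hL₁ hL₂, fun Q hQ c hc => ?_⟩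
  exact max_le (hβ₁lb _ (fun _ => (hQ _).1) c (RestrictedLipschitzWith.fst_slice hc hb))
    (hβ₂lb _ (fun _ => (hQ _).2) c (RestrictedLipschitzWith.snd_slice hc ha))
end
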